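/- arXiv:math/0602658 — 2 statements merged into one kernel-verified Lean document; each statement's English description precedes it below -/
import Mathlib

section
/- Let f ∈ L_q^2(ℝ_{q,+}) be such that the functions x ↦ x f(x) and D_q f belong to L_q^2(ℝ_{q,+}), and suppose f(0) = 0 in the sense that f(qⁿ) → 0 as n → +∞. Then ‖f‖_{q,2}² ≤ ((1+q^{3/2})/q^{1/2}) · ‖D_q f‖_{q,2} · (∫_0^∞ x² |f(x)|² d_q x)^{1/2}. -/
open scoped BigOperators
noncomputable section

/-- Jackson `q`-integral over `ℝ_{q,+}` of a complex-valued function: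
`∫₀^∞ f(t) d_q t = (1-q) Σ_{n ∈ ℤ} qⁿ f(qⁿ)`. -/
def jacksonC (q : ℝ) (f : ℝ → ℂ) : ℂ :=
  (1 - q : ℂ) * ∑' n : ℤ, ((q ^ n : ℝ) : ℂ) * f (q ^ n)

/-- Jackson `q`-integral over `ℝ_{q,+}` of a real-valued function. -/
def jacksonR (q : ℝ) (f : ℝ → ℝ) : ℝ :=
  (1 - q) * ∑' n : ℤ, q ^ n * f (q ^ n)

/-- `f ∈ L_q^1(ℝ_{q,+})`. -/
def memL1 (q : ℝ) (f : ℝ → ℂ) : Prop :=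
  Summable fun n : ℤ => q ^ n * ‖f (q ^ n)‖

/-- `f ∈ L_q^2(ℝ_{q,+})`. -/
def memL2 (q : ℝ) (f : ℝ → ℂ) : Prop :=
  Summable fun n : ℤ => q ^ n * ‖f (q ^ n)‖ ^ 2

/-- `‖f‖_{q,1}`. -/
def qNorm1 (q : ℝ) (f : ℝ → ℂ) : ℝ :=
  jacksonR q fun t => ‖f t‖

/-- `‖f‖_{q,2}`. -/
def qNorm2 (q : ℝ) (f : ℝ → ℂ) : ℝ :=
  Real.sqrt (jacksonR q fun t => ‖f t‖ ^ 2)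

/-- The `q`-derivative `D_q f`. -/
def qDeriv (q : ℝ) (f : ℝ → ℂ) (x : ℝ) : ℂ :=
  (f x - f (q * x)) / (((1 - q) * x : ℝ) : ℂ)

/-- `q`-factorial `[n]_q! = Π_{k=1}^n (1-q^k)/(1-q)`. -/
def qFactorial (q : ℝ) (n : ℕ) : ℝ :=
  ∏ k ∈ Finset.range n, (1 - q ^ (k + 1)) / (1 - q)

/-- `sin(x;q²) = Σ_{n≥0} (−1)ⁿ q^{n(n−1)} x^{2n+1}/[2n+1]_q!`. -/
def qSin (q : ℝ) (x : ℝ) : ℝ :=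
  ∑' n : ℕ, (-1 : ℝ) ^ n * q ^ (n * (n - 1)) * x ^ (2 * n + 1) / qFactorial q (2 * n + 1)

/-- `cos(x;q²) = Σ_{n≥0} (−1)ⁿ q^{n(n−1)} x^{2n}/[2n]_q!`. -/
def qCos (q : ℝ) (x : ℝ) : ℝ :=
  ∑' n : ℕ, (-1 : ℝ) ^ n * q ^ (n * (n - 1)) * x ^ (2 * n) / qFactorial q (2 * n)

/-- Infinite `q`-Pochhammer symbol `(a;p)_∞ = Π_{k≥0} (1 − a pᵏ)`. -/
def qPoch (a p : ℝ) : ℝ := ∏' k : ℕ, (1 - a * p ^ k)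

/-- `Γ_{q²}(1/2) = ((q²;q²)_∞/(q;q²)_∞)(1−q²)^{1/2}`. -/
def qGammaHalf (q : ℝ) : ℝ :=
  (qPoch (q ^ 2) (q ^ 2) / qPoch q (q ^ 2)) * Real.sqrt (1 - q ^ 2)

/-- `c_q = (1+q^{−1})^{1/2}/Γ_{q²}(1/2)`. -/
def cq (q : ℝ) : ℝ := Real.sqrt (1 + q⁻¹) / qGammaHalf q

/-- The `q`-Fourier-sine transform `_qF(f)`. -/
def qFourierSin (q : ℝ) (f : ℝ → ℂ) (x : ℝ) : ℂ :=
  (cq q : ℂ) * jacksonC q fun t => f t * (qSin q (x * t) : ℂ)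

/-- The `q`-Fourier-cosine transform `F_q(f)`. -/
def qFourierCos (q : ℝ) (f : ℝ → ℂ) (x : ℝ) : ℂ :=
  (cq q : ℂ) * jacksonC q fun t => f t * (qCos q (x * t) : ℂ)

/-! Write `a n = |f(qⁿ)|` and `d n = |D_q f(qⁿ)|`, so that `|a n - a (n+1)| ≤ (1-q) qⁿ d n`.
Reindexing the bilateral sum by `n ↦ n + 1` (no boundary terms on `ℤ`) gives
`(1/q - 1) Σ qⁿ a n² = Σ qⁿ (a(n+1)² - a n²) ≤ (1-q) Σ q²ⁿ d n (a n + a (n+1))`, and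
Cauchy–Schwarz with `q²ⁿ = q^{n/2} q^{3n/2}` bounds the right side by
`(1-q) (1 + q^{-3/2}) (Σ qⁿ d n²)^{1/2} (Σ q³ⁿ a n²)^{1/2}`. -/

namespace Real

theorem summable_and_tsum_sqrt_mul_sqrt_le {ι : Type*} {F G : ι → ℝ} (hF : ∀ i, 0 ≤ F i)
    (hG : ∀ i, 0 ≤ G i) (hFs : Summable F) (hGs : Summable G) :
    (Summable fun i => √(F i) * √(G i)) ∧
      ∑' i, √(F i) * √(G i) ≤ √(∑' i, F i) * √(∑' i, G i) := by
  have h := summable_and_inner_le_Lp_mul_Lq_tsum_of_nonneg HolderConjugate.two_two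
    (fun i => sqrt_nonneg (F i)) (fun i => sqrt_nonneg (G i))
    (by simpa only [rpow_two, sq_sqrt (hF _)] using hFs)
    (by simpa only [rpow_two, sq_sqrt (hG _)] using hGs)
  simp only [rpow_two, sq_sqrt (hF _), sq_sqrt (hG _), ← sqrt_eq_rpow] at h
  exact h

end Real

theorem summable_and_tsum_sq_mul_mul_le {ι : Type*} {w x y : ι → ℝ} (hw : ∀ i, 0 ≤ w i)
    (hx : ∀ i, 0 ≤ x i) (hy : ∀ i, 0 ≤ y i) (hxs : Summable fun i => w i * x i ^ 2)
    (hys : Summable fun i => w i ^ 3 * y i ^ 2) :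
    (Summable fun i => w i ^ 2 * (x i * y i)) ∧
      ∑' i, w i ^ 2 * (x i * y i) ≤ √(∑' i, w i * x i ^ 2) * √(∑' i, w i ^ 3 * y i ^ 2) := by
  have hprod (i : ι) : √(w i * x i ^ 2) * √(w i ^ 3 * y i ^ 2) = w i ^ 2 * (x i * y i) := by
    have := hw i
    rw [← Real.sqrt_mul (by positivity),
      show w i * x i ^ 2 * (w i ^ 3 * y i ^ 2) = (w i ^ 2 * (x i * y i)) ^ 2 by ring]
    exact Real.sqrt_sq (mul_nonneg (by positivity) (mul_nonneg (hx i) (hy i)))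
  simpa only [hprod] using Real.summable_and_tsum_sqrt_mul_sqrt_le
    (fun i => by have := hw i; positivity) (fun i => by have := hw i; positivity) hxs hys

theorem HasSum.mul_comp_add_one {w b : ℤ → ℝ} {r s : ℝ} (hr : r ≠ 0)
    (hw : ∀ n, w (n + 1) = r * w n) (h : HasSum (fun n => w n * b n) s) :
    HasSum (fun n => w n * b (n + 1)) (s / r) := by
  refine ((Equiv.addRight (1 : ℤ)).hasSum_iff.mpr (h.div_const r)).congr_fun fun n => ?_
  simp only [Function.comp_apply, Equiv.coe_addRight, hw]
  field_simp

section WeightedSums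

variable {q : ℝ} {a d : ℤ → ℝ} {S D M : ℝ}

theorem div_sub_le_of_abs_sub_le (hq0 : 0 < q) (hq1 : q < 1)
    (ha : ∀ n, 0 ≤ a n) (hd : ∀ n, 0 ≤ d n)
    (hstep : ∀ n, |a n - a (n + 1)| ≤ (1 - q) * q ^ n * d n)
    (hS : HasSum (fun n => q ^ n * a n ^ 2) S) (hD : HasSum (fun n => q ^ n * d n ^ 2) D)
    (hM : HasSum (fun n => (q ^ n) ^ 3 * a n ^ 2) M) :
    S / q - S ≤ (1 - q) * (√D * √M + √D * √(M / q ^ 3)) := by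
  have hw (n : ℤ) : 0 ≤ q ^ n := (zpow_pos hq0 n).le
  have hS' : HasSum (fun n => q ^ n * a (n + 1) ^ 2) (S / q) :=
    hS.mul_comp_add_one (w := (q ^ ·)) (b := (a · ^ 2)) hq0.ne' fun n => by
      rw [zpow_add_one₀ hq0.ne', mul_comm]
  have hM' : HasSum (fun n => (q ^ n) ^ 3 * a (n + 1) ^ 2) (M / q ^ 3) :=
    hM.mul_comp_add_one (w := fun n => (q ^ n) ^ 3) (b := (a · ^ 2)) (pow_ne_zero 3 hq0.ne')
      fun n => by rw [zpow_add_one₀ hq0.ne']; ring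
  obtain ⟨hP, hPle⟩ := summable_and_tsum_sq_mul_mul_le hw hd ha hD.summable hM.summable
  obtain ⟨hP', hP'le⟩ :=
    summable_and_tsum_sq_mul_mul_le hw hd (fun n => ha (n + 1)) hD.summable hM'.summable
  rw [hD.tsum_eq, hM.tsum_eq] at hPle
  rw [hD.tsum_eq, hM'.tsum_eq] at hP'le
  have hpt (n : ℤ) : q ^ n * a (n + 1) ^ 2 - q ^ n * a n ^ 2 ≤
      (1 - q) * ((q ^ n) ^ 2 * (d n * a n) + (q ^ n) ^ 2 * (d n * a (n + 1))) := by
    have hsum : 0 ≤ a n + a (n + 1) := add_nonneg (ha n) (ha (n + 1))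
    have hdiff : a (n + 1) ^ 2 - a n ^ 2 ≤ |a n - a (n + 1)| * (a n + a (n + 1)) := by
      rw [show a (n + 1) ^ 2 - a n ^ 2 = -(a n - a (n + 1)) * (a n + a (n + 1)) by ring]
      exact mul_le_mul_of_nonneg_right (neg_le_abs _) hsum
    calc q ^ n * a (n + 1) ^ 2 - q ^ n * a n ^ 2 = q ^ n * (a (n + 1) ^ 2 - a n ^ 2) := by ring
      _ ≤ q ^ n * ((1 - q) * q ^ n * d n * (a n + a (n + 1))) :=
        mul_le_mul_of_nonneg_left (hdiff.trans (mul_le_mul_of_nonneg_right (hstep n) hsum)) (hw n)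
      _ = _ := by ring
  exact (hasSum_le hpt (hS'.sub hS) ((hP.hasSum.add hP'.hasSum).mul_left (1 - q))).trans
    (mul_le_mul_of_nonneg_left (add_le_add hPle hP'le) (by linarith))

theorem le_mul_sqrt_mul_sqrt_of_abs_sub_le (hq0 : 0 < q) (hq1 : q < 1)
    (ha : ∀ n, 0 ≤ a n) (hd : ∀ n, 0 ≤ d n)
    (hstep : ∀ n, |a n - a (n + 1)| ≤ (1 - q) * q ^ n * d n)
    (hS : HasSum (fun n => q ^ n * a n ^ 2) S) (hD : HasSum (fun n => q ^ n * d n ^ 2) D)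
    (hM : HasSum (fun n => (q ^ n) ^ 3 * a n ^ 2) M) :
    S ≤ (1 + √q ^ 3) / √q * (√D * √M) := by
  have hkey := div_sub_le_of_abs_sub_le hq0 hq1 ha hd hstep hS hD hM
  obtain ⟨t, ht, rfl⟩ : ∃ t, 0 < t ∧ q = t ^ 2 :=
    ⟨√q, Real.sqrt_pos.2 hq0, (Real.sq_sqrt hq0.le).symm⟩
  rw [Real.sqrt_div' _ (by positivity), show (t ^ 2) ^ 3 = (t ^ 3) ^ 2 by ring,
    Real.sqrt_sq (by positivity)] at hkey
  rw [Real.sqrt_sq ht.le]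
  have h1q : 0 < 1 - t ^ 2 := by linarith
  refine le_of_mul_le_mul_left ?_ h1q
  calc (1 - t ^ 2) * S = t ^ 2 * (S / t ^ 2 - S) := by field_simp
    _ ≤ t ^ 2 * ((1 - t ^ 2) * (√D * √M + √D * (√M / t ^ 3))) := by gcongr
    _ = (1 - t ^ 2) * ((1 + t ^ 3) / t * (√D * √M)) := by field_simp; ring

end WeightedSums

theorem abs_norm_sub_norm_le_mul_norm_qDeriv {q x : ℝ} (hq1 : q < 1) (hx : 0 < x)
    (f : ℝ → ℂ) : |‖f x‖ - ‖f (q * x)‖| ≤ (1 - q) * x * ‖qDeriv q f x‖ := by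
  have hpos : 0 < (1 - q) * x := mul_pos (by linarith) hx
  calc |‖f x‖ - ‖f (q * x)‖| ≤ ‖f x - f (q * x)‖ := abs_norm_sub_norm_le _ _
    _ = (1 - q) * x * ‖qDeriv q f x‖ := by
      rw [qDeriv, norm_div, Complex.norm_real, Real.norm_of_nonneg hpos.le,
        mul_div_cancel₀ _ hpos.ne']

theorem memL2_ofReal_mul_iff {q : ℝ} (hq0 : 0 < q) (f : ℝ → ℂ) :
    memL2 q (fun x => (x : ℂ) * f x) ↔ Summable fun n : ℤ => (q ^ n) ^ 3 * ‖f (q ^ n)‖ ^ 2 := by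
  refine summable_congr fun n => ?_
  rw [norm_mul, Complex.norm_real, Real.norm_of_nonneg (zpow_pos hq0 n).le]
  ring

theorem sqrt_jacksonR {q : ℝ} (hq1 : q ≤ 1) (g : ℝ → ℝ) :
    √(jacksonR q g) = √(1 - q) * √(∑' n : ℤ, q ^ n * g (q ^ n)) := by
  rw [jacksonR, Real.sqrt_mul (by linarith)]

theorem q_uncertainty_hilbert_form_general
    (q : ℝ) (hq0 : 0 < q) (hq1 : q < 1)
    (f : ℝ → ℂ) (hf : memL2 q f)
    (hxf : memL2 q fun x => (x : ℂ) * f x)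
    (hDf : memL2 q (qDeriv q f)) :
    qNorm2 q f ^ 2 ≤
      (1 + q ^ ((3 : ℝ) / 2)) / q ^ ((1 : ℝ) / 2) * qNorm2 q (qDeriv q f) *
        Real.sqrt (jacksonR q fun x => x ^ 2 * ‖f x‖ ^ 2) := by
  have hstep (n : ℤ) :
      |‖f (q ^ n)‖ - ‖f (q ^ (n + 1))‖| ≤ (1 - q) * q ^ n * ‖qDeriv q f (q ^ n)‖ := by
    rw [zpow_add_one₀ hq0.ne', mul_comm _ q]
    exact abs_norm_sub_norm_le_mul_norm_qDeriv hq1 (zpow_pos hq0 n) f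
  have hcore := le_mul_sqrt_mul_sqrt_of_abs_sub_le (a := fun n => ‖f (q ^ n)‖)
    (d := fun n => ‖qDeriv q f (q ^ n)‖) hq0 hq1 (fun _ => norm_nonneg _)
    (fun _ => norm_nonneg _) hstep hf.hasSum hDf.hasSum ((memL2_ofReal_mul_iff hq0 f).1 hxf).hasSum
  have h1q : 0 ≤ 1 - q := by linarith
  have hS : 0 ≤ ∑' n : ℤ, q ^ n * ‖f (q ^ n)‖ ^ 2 :=
    tsum_nonneg fun n => mul_nonneg (zpow_pos hq0 n).le (sq_nonneg _)
  rw [qNorm2, qNorm2, sqrt_jacksonR hq1.le, sqrt_jacksonR hq1.le, sqrt_jacksonR hq1.le,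
    tsum_congr fun n : ℤ => (by ring : q ^ n * ((q ^ n) ^ 2 * ‖f (q ^ n)‖ ^ 2) =
      (q ^ n) ^ 3 * ‖f (q ^ n)‖ ^ 2), mul_pow,
    Real.sq_sqrt h1q, Real.sq_sqrt hS, ← Real.sqrt_eq_rpow,
    show q ^ ((3 : ℝ) / 2) = √q ^ 3 by
      rw [Real.sqrt_eq_rpow, ← Real.rpow_natCast, ← Real.rpow_mul hq0.le]; norm_num]
  calc (1 - q) * ∑' n : ℤ, q ^ n * ‖f (q ^ n)‖ ^ 2
      ≤ (1 - q) * ((1 + √q ^ 3) / √q * (√(∑' n : ℤ, q ^ n * ‖qDeriv q f (q ^ n)‖ ^ 2) *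
          √(∑' n : ℤ, (q ^ n) ^ 3 * ‖f (q ^ n)‖ ^ 2))) := by gcongr
    _ = _ := by nth_rewrite 1 [← Real.mul_self_sqrt h1q]; ring

/-- `‖f‖_{q,2}² ≤ ((1+q^{3/2})/q^{1/2}) ‖D_q f‖_{q,2} (∫₀^∞ x²|f(x)|² d_q x)^{1/2}`. -/
theorem q_uncertainty_hilbert_form
    (q : ℝ) (hq0 : 0 < q) (hq1 : q < 1)
    (hlog : ∃ m : ℤ, Real.log (1 - q) / Real.log q = (m : ℝ))
    (f : ℝ → ℂ) (hf : memL2 q f)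
    (hxf : memL2 q fun x => (x : ℂ) * f x)
    (hDf : memL2 q (qDeriv q f))
    (h0 : Filter.Tendsto (fun n : ℕ => f (q ^ n)) Filter.atTop (nhds 0)) :
    qNorm2 q f ^ 2 ≤
      (1 + q ^ ((3 : ℝ) / 2)) / q ^ ((1 : ℝ) / 2) * qNorm2 q (qDeriv q f) *
        Real.sqrt (jacksonR q fun x => x ^ 2 * ‖f x‖ ^ 2) :=
  q_uncertainty_hilbert_form_general q hq0 hq1 f hf hxf hDf
end
end

section
/- Let f ∈ L_q^2(ℝ_{q,+}) be such that the functions x ↦ x f(x) and D_q f belong to L_q^2(ℝ_{q,+}), and suppose f(0) = 0 in the sense that f(qⁿ) → 0 as n → +∞. Then |∫_0^∞ f(x)·conj(f(qx)) d_q x| ≤ (1 + q^{−1/2}) · ‖D_q f‖_{q,2} · (∫_0^∞ x² |f(x)|² d_q x)^{1/2}. -/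
open scoped BigOperators
noncomputable section

/-! Write `a n = f (qⁿ)` and `d n = D_q f (qⁿ)`. The definition of `D_q` gives
`‖a (n+1)‖ ≤ ‖a n‖ + (1-q) qⁿ ‖d n‖`, and the inequality is a statement about the real
sequences `‖a‖`, `‖d‖` subject to this one-sided estimate. Multiplying
`‖a (n+1)‖² - ‖a n‖² ≤ (1-q) qⁿ ‖d n‖ (‖a n‖ + ‖a (n+1)‖)` by `qⁿ` and summing over `ℤ`, the
series `Σ (qⁿ ‖a n‖² - qⁿ⁺¹ ‖a (n+1)‖²)` telescopes to `0`, so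
`Σ qⁿ ‖a n‖² ≤ q Σ q²ⁿ ‖d n‖ (‖a n‖ + ‖a (n+1)‖)`. Cauchy–Schwarz with the weights `qⁿ` and `q³ⁿ`
bounds the right-hand side by `(q + q^{-1/2}) ‖D_q f‖ ‖x f‖`, the shift `n ↦ n+1` costing a factor
`q^{-3/2}`. Finally `‖a n‖ ‖a (n+1)‖ ≤ ‖a n‖² + (1-q) qⁿ ‖a n‖ ‖d n‖`. -/

theorem Real.summable_and_tsum_mul_mul_le_sqrt {ι : Type*} {w u v x y : ι → ℝ}
    (hw : 0 ≤ w) (hu : 0 ≤ u) (hv : 0 ≤ v) (hx : 0 ≤ x) (hy : 0 ≤ y)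
    (hwuv : ∀ i, w i ^ 2 = u i * v i)
    (hux : Summable fun i => u i * x i ^ 2) (hvy : Summable fun i => v i * y i ^ 2) :
    (Summable fun i => w i * (x i * y i)) ∧
      ∑' i, w i * (x i * y i) ≤ √(∑' i, u i * x i ^ 2) * √(∑' i, v i * y i ^ 2) := by
  have hsq {a b : ι → ℝ} (ha : 0 ≤ a) (i : ι) : (√(a i) * b i) ^ (2 : ℝ) = a i * b i ^ 2 := by
    rw [Real.rpow_two, mul_pow, Real.sq_sqrt (ha i)]
  have hprod (i : ι) : (√(u i) * x i) * (√(v i) * y i) = w i * (x i * y i) := by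
    rw [mul_mul_mul_comm, ← Real.sqrt_mul (hu i), ← hwuv, Real.sqrt_sq (hw i)]
  have := Real.summable_and_inner_le_Lp_mul_Lq_tsum_of_nonneg Real.HolderConjugate.two_two
    (fun i => mul_nonneg (Real.sqrt_nonneg (u i)) (hx i))
    (fun i => mul_nonneg (Real.sqrt_nonneg (v i)) (hy i))
    (by simpa only [hsq hu] using hux) (by simpa only [hsq hv] using hvy)
  simpa only [hprod, hsq hu, hsq hv, ← Real.sqrt_eq_rpow] using this

theorem tsum_sub_comp_add_one_eq_zero {g : ℤ → ℝ} (hg : Summable g) :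
    ∑' n : ℤ, (g n - g (n + 1)) = 0 := by
  have hshift : Summable fun n : ℤ => g (n + 1) := hg.comp_injective (add_left_injective 1)
  rw [hg.tsum_sub hshift, sub_eq_zero]
  exact ((Equiv.addRight 1).tsum_eq g).symm

section Shift

variable {q : ℝ}

theorem zpow_mul_comp_add_one_eq (hq : q ≠ 0) (k : ℤ) (g : ℤ → ℝ) (n : ℤ) :
    q ^ (k * n) * g (n + 1) = q ^ (-k) * (q ^ (k * (n + 1)) * g (n + 1)) := by
  rw [← mul_assoc, ← zpow_add₀ hq]
  ring_nf

theorem summable_zpow_mul_comp_add_one_iff (hq : q ≠ 0) (k : ℤ) (g : ℤ → ℝ) :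
    (Summable fun n : ℤ => q ^ (k * n) * g (n + 1)) ↔
      Summable fun n : ℤ => q ^ (k * n) * g n := by
  simp only [zpow_mul_comp_add_one_eq hq k g, summable_mul_left_iff (zpow_ne_zero _ hq)]
  exact (Equiv.addRight 1).summable_iff (f := fun n : ℤ => q ^ (k * n) * g n)

theorem tsum_zpow_mul_comp_add_one (hq : q ≠ 0) (k : ℤ) (g : ℤ → ℝ) :
    ∑' n : ℤ, q ^ (k * n) * g (n + 1) = q ^ (-k) * ∑' n : ℤ, q ^ (k * n) * g n := by
  simp only [zpow_mul_comp_add_one_eq hq k g, tsum_mul_left]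
  congr 1
  exact (Equiv.addRight 1).tsum_eq (fun n : ℤ => q ^ (k * n) * g n)

end Shift

section Energy

variable {q : ℝ} {x e : ℤ → ℝ}

theorem summable_and_tsum_zpow_two_mul_le (hq : 0 < q) (he : 0 ≤ e) (hx : 0 ≤ x)
    (hes : Summable fun n : ℤ => q ^ n * e n ^ 2)
    (hxs : Summable fun n : ℤ => q ^ (3 * n) * x n ^ 2) :
    (Summable fun n : ℤ => q ^ (2 * n) * (e n * x n)) ∧
      ∑' n : ℤ, q ^ (2 * n) * (e n * x n) ≤
        √(∑' n : ℤ, q ^ n * e n ^ 2) * √(∑' n : ℤ, q ^ (3 * n) * x n ^ 2) :=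
  Real.summable_and_tsum_mul_mul_le_sqrt (fun n => (zpow_pos hq _).le)
    (fun n => (zpow_pos hq _).le) (fun n => (zpow_pos hq _).le) he hx
    (fun n => by rw [← zpow_natCast, ← zpow_mul, ← zpow_add₀ hq.ne']; ring_nf) hes hxs

theorem tsum_zpow_mul_sq_le_mul_tsum (hq0 : 0 < q) (hq1 : q < 1) (hx : 0 ≤ x)
    (hstep : ∀ n, x (n + 1) ≤ x n + (1 - q) * q ^ n * e n)
    (hxs : Summable fun n : ℤ => q ^ n * x n ^ 2)
    (hM : Summable fun n : ℤ => q ^ (2 * n) * (e n * (x n + x (n + 1)))) :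
    ∑' n : ℤ, q ^ n * x n ^ 2 ≤ q * ∑' n : ℤ, q ^ (2 * n) * (e n * (x n + x (n + 1))) := by
  -- `q ^ (1 * n)` rather than `q ^ n`, to match the shift lemmas with `k = 1`
  have hpt (n : ℤ) : (1 - q) * (q ^ (1 * n) * x (n + 1) ^ 2) ≤
      (q ^ n * x n ^ 2 - q ^ (n + 1) * x (n + 1) ^ 2) +
        (1 - q) * (q ^ (2 * n) * (e n * (x n + x (n + 1)))) := by
    have hqn := zpow_pos hq0 n
    have hsq : x (n + 1) ^ 2 - x n ^ 2 ≤ (1 - q) * q ^ n * e n * (x n + x (n + 1)) := by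
      nlinarith [mul_le_mul_of_nonneg_right (hstep n) (add_nonneg (hx n) (hx (n + 1)))]
    rw [one_mul, zpow_add_one₀ hq0.ne', two_mul, zpow_add₀ hq0.ne']
    nlinarith [mul_le_mul_of_nonneg_left hsq hqn.le]
  have hlhs : Summable fun n : ℤ => (1 - q) * (q ^ (1 * n) * x (n + 1) ^ 2) :=
    ((summable_zpow_mul_comp_add_one_iff hq0.ne' 1 (fun n => x n ^ 2)).2
      (by simpa only [one_mul] using hxs)).mul_left _
  have hdiff : Summable fun n : ℤ => q ^ n * x n ^ 2 - q ^ (n + 1) * x (n + 1) ^ 2 :=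
    hxs.sub (hxs.comp_injective (add_left_injective 1))
  have key := hlhs.tsum_le_tsum hpt (hdiff.add (hM.mul_left (1 - q)))
  rw [hdiff.tsum_add (hM.mul_left _), tsum_sub_comp_add_one_eq_zero hxs, zero_add] at key
  simp only [tsum_mul_left, tsum_zpow_mul_comp_add_one hq0.ne' 1 (fun n => x n ^ 2)] at key
  simp only [one_mul] at key
  rw [← inv_mul_le_iff₀ hq0, ← zpow_neg_one]
  exact le_of_mul_le_mul_left key (sub_pos.2 hq1)

theorem tsum_zpow_mul_sq_le (hq0 : 0 < q) (hq1 : q < 1) (hx : 0 ≤ x) (he : 0 ≤ e)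
    (hstep : ∀ n, x (n + 1) ≤ x n + (1 - q) * q ^ n * e n)
    (hxs : Summable fun n : ℤ => q ^ n * x n ^ 2)
    (hes : Summable fun n : ℤ => q ^ n * e n ^ 2)
    (hxs3 : Summable fun n : ℤ => q ^ (3 * n) * x n ^ 2) :
    ∑' n : ℤ, q ^ n * x n ^ 2 ≤ (q + q ^ (-(1 : ℝ) / 2)) *
      (√(∑' n : ℤ, q ^ n * e n ^ 2) * √(∑' n : ℤ, q ^ (3 * n) * x n ^ 2)) := by
  obtain ⟨hs₀, hle₀⟩ := summable_and_tsum_zpow_two_mul_le hq0 he hx hes hxs3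
  obtain ⟨hs₁, hle₁⟩ := summable_and_tsum_zpow_two_mul_le hq0 he (fun n => hx (n + 1)) hes
    ((summable_zpow_mul_comp_add_one_iff hq0.ne' 3 (fun n => x n ^ 2)).2 hxs3)
  rw [tsum_zpow_mul_comp_add_one hq0.ne' 3 (fun n => x n ^ 2),
    Real.sqrt_mul (zpow_pos hq0 _).le] at hle₁
  have hsplit : ∑' n : ℤ, q ^ (2 * n) * (e n * (x n + x (n + 1))) =
      ∑' n : ℤ, q ^ (2 * n) * (e n * x n) + ∑' n : ℤ, q ^ (2 * n) * (e n * x (n + 1)) := by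
    simp only [mul_add]
    exact hs₀.tsum_add hs₁
  have hconst : q * √(q ^ (-3 : ℤ)) = q ^ (-(1 : ℝ) / 2) := by
    rw [Real.sqrt_eq_rpow, ← Real.rpow_intCast, ← Real.rpow_mul hq0.le,
      ← Real.rpow_one_add' hq0.le (by norm_num)]
    norm_num
  calc ∑' n : ℤ, q ^ n * x n ^ 2
      ≤ q * ∑' n : ℤ, q ^ (2 * n) * (e n * (x n + x (n + 1))) :=
        tsum_zpow_mul_sq_le_mul_tsum hq0 hq1 hx hstep hxs
          (by simpa only [mul_add] using hs₀.add hs₁)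
    _ ≤ q * (√(∑' n : ℤ, q ^ n * e n ^ 2) * √(∑' n : ℤ, q ^ (3 * n) * x n ^ 2) +
          √(∑' n : ℤ, q ^ n * e n ^ 2) *
            (√(q ^ (-3 : ℤ)) * √(∑' n : ℤ, q ^ (3 * n) * x n ^ 2))) := by
        rw [hsplit]; gcongr
    _ = _ := by rw [← hconst]; ring

theorem summable_and_tsum_zpow_mul_mul_succ_le (hq0 : 0 < q) (hq1 : q < 1) (hx : 0 ≤ x)
    (he : 0 ≤ e) (hstep : ∀ n, x (n + 1) ≤ x n + (1 - q) * q ^ n * e n)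
    (hxs : Summable fun n : ℤ => q ^ n * x n ^ 2)
    (hes : Summable fun n : ℤ => q ^ n * e n ^ 2)
    (hxs3 : Summable fun n : ℤ => q ^ (3 * n) * x n ^ 2) :
    (Summable fun n : ℤ => q ^ n * (x n * x (n + 1))) ∧
      ∑' n : ℤ, q ^ n * (x n * x (n + 1)) ≤ (1 + q ^ (-(1 : ℝ) / 2)) *
        (√(∑' n : ℤ, q ^ n * e n ^ 2) * √(∑' n : ℤ, q ^ (3 * n) * x n ^ 2)) := by
  obtain ⟨hs₀, hle₀⟩ := summable_and_tsum_zpow_two_mul_le hq0 he hx hes hxs3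
  have hpt (n : ℤ) : q ^ n * (x n * x (n + 1)) ≤
      q ^ n * x n ^ 2 + (1 - q) * (q ^ (2 * n) * (e n * x n)) := by
    have h := mul_le_mul_of_nonneg_left (hstep n) (mul_nonneg (zpow_pos hq0 n).le (hx n))
    rw [two_mul, zpow_add₀ hq0.ne']
    linear_combination h
  have hbound := hxs.add (hs₀.mul_left (1 - q))
  have hs : Summable fun n : ℤ => q ^ n * (x n * x (n + 1)) :=
    hbound.of_nonneg_of_le
      (fun n => mul_nonneg (zpow_pos hq0 n).le (mul_nonneg (hx n) (hx (n + 1)))) hpt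
  refine ⟨hs, (hs.tsum_le_tsum hpt hbound).trans ?_⟩
  rw [hxs.tsum_add (hs₀.mul_left _), tsum_mul_left]
  have hA := tsum_zpow_mul_sq_le hq0 hq1 hx he hstep hxs hes hxs3
  linarith [mul_le_mul_of_nonneg_left hle₀ (sub_pos.2 hq1).le]

end Energy

theorem norm_jacksonC_le {q : ℝ} (hq0 : 0 ≤ q) (hq1 : q ≤ 1) {g : ℝ → ℂ} (hg : memL1 q g) :
    ‖jacksonC q g‖ ≤ qNorm1 q g := by
  have hnorm (n : ℤ) : ‖((q ^ n : ℝ) : ℂ) * g (q ^ n)‖ = q ^ n * ‖g (q ^ n)‖ := by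
    rw [norm_mul, Complex.norm_real, Real.norm_of_nonneg (zpow_nonneg hq0 n)]
  rw [jacksonC, qNorm1, jacksonR, norm_mul, ← Complex.ofReal_one, ← Complex.ofReal_sub,
    Complex.norm_real, Real.norm_of_nonneg (sub_nonneg.2 hq1)]
  gcongr
  exact (norm_tsum_le_tsum_norm (hg.congr fun n => (hnorm n).symm)).trans_eq (tsum_congr hnorm)

theorem norm_sub_eq_mul_norm_qDeriv {q : ℝ} (hq1 : q < 1) (f : ℝ → ℂ) {x : ℝ} (hx : 0 < x) :
    ‖f x - f (q * x)‖ = (1 - q) * x * ‖qDeriv q f x‖ := by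
  have hc : 0 < (1 - q) * x := mul_pos (sub_pos.2 hq1) hx
  rw [qDeriv, norm_div, Complex.norm_real, Real.norm_of_nonneg hc.le, mul_div_cancel₀ _ hc.ne']

theorem q_uncertainty_shifted_form_general
    (q : ℝ) (hq0 : 0 < q) (hq1 : q < 1)
    (f : ℝ → ℂ) (hf : memL2 q f)
    (hxf : memL2 q fun x => (x : ℂ) * f x)
    (hDf : memL2 q (qDeriv q f)) :
    ‖jacksonC q fun x => f x * (starRingEnd ℂ) (f (q * x))‖ ≤
      (1 + q ^ (-(1 : ℝ) / 2)) * qNorm2 q (qDeriv q f) *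
        Real.sqrt (jacksonR q fun x => x ^ 2 * ‖f x‖ ^ 2) := by
  have hshift (n : ℤ) : q * q ^ n = q ^ (n + 1) := by rw [zpow_add_one₀ hq0.ne', mul_comm]
  have hcube (n : ℤ) : q ^ n * (q ^ n) ^ 2 = q ^ (3 * n) := by
    rw [← zpow_natCast, ← zpow_mul, ← zpow_add₀ hq0.ne']; ring_nf
  have hstep (n : ℤ) :
      ‖f (q ^ (n + 1))‖ ≤ ‖f (q ^ n)‖ + (1 - q) * q ^ n * ‖qDeriv q f (q ^ n)‖ := by
    rw [← norm_sub_eq_mul_norm_qDeriv hq1 f (zpow_pos hq0 n), hshift]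
    exact norm_le_norm_add_norm_sub _ _
  have hxf3 : Summable fun n : ℤ => q ^ (3 * n) * ‖f (q ^ n)‖ ^ 2 := by
    simpa only [memL2, norm_mul, Complex.norm_real, Real.norm_of_nonneg (zpow_pos hq0 _).le,
      mul_pow, ← mul_assoc, hcube] using hxf
  obtain ⟨hs, hle⟩ := summable_and_tsum_zpow_mul_mul_succ_le (x := fun n => ‖f (q ^ n)‖)
    (e := fun n => ‖qDeriv q f (q ^ n)‖) hq0 hq1 (fun n => norm_nonneg _)
    (fun n => norm_nonneg _) hstep hf hDf hxf3
  have hprod : (fun n : ℤ => q ^ n * ‖f (q ^ n) * (starRingEnd ℂ) (f (q * q ^ n))‖) =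
      fun n : ℤ => q ^ n * (‖f (q ^ n)‖ * ‖f (q ^ (n + 1))‖) := by
    simp only [norm_mul, Complex.norm_conj, hshift]
  have hB : jacksonR q (fun x => x ^ 2 * ‖f x‖ ^ 2) =
      (1 - q) * ∑' n : ℤ, q ^ (3 * n) * ‖f (q ^ n)‖ ^ 2 := by
    simp only [jacksonR, ← mul_assoc, hcube]
  calc ‖jacksonC q fun x => f x * (starRingEnd ℂ) (f (q * x))‖
      ≤ (1 - q) * ∑' n : ℤ, q ^ n * (‖f (q ^ n)‖ * ‖f (q ^ (n + 1))‖) := by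
        refine (norm_jacksonC_le hq0.le hq1.le ?_).trans_eq ?_
        · rw [memL1, hprod]; exact hs
        · rw [qNorm1, jacksonR, hprod]
    _ ≤ (1 - q) * ((1 + q ^ (-(1 : ℝ) / 2)) * (√(∑' n : ℤ, q ^ n * ‖qDeriv q f (q ^ n)‖ ^ 2) *
          √(∑' n : ℤ, q ^ (3 * n) * ‖f (q ^ n)‖ ^ 2))) := by
        gcongr
    _ = _ := by
        rw [qNorm2, jacksonR, hB, Real.sqrt_mul (sub_pos.2 hq1).le,
          Real.sqrt_mul (sub_pos.2 hq1).le]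
        nth_rw 1 [← Real.mul_self_sqrt (sub_pos.2 hq1).le]
        ring

/-- `|∫₀^∞ f(x) conj(f(qx)) d_q x| ≤ (1+q^{−1/2}) ‖D_q f‖_{q,2} (∫₀^∞ x²|f(x)|² d_q x)^{1/2}`. -/
theorem q_uncertainty_shifted_form
    (q : ℝ) (hq0 : 0 < q) (hq1 : q < 1)
    (hlog : ∃ m : ℤ, Real.log (1 - q) / Real.log q = (m : ℝ))
    (f : ℝ → ℂ) (hf : memL2 q f)
    (hxf : memL2 q fun x => (x : ℂ) * f x)
    (hDf : memL2 q (qDeriv q f))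
    (h0 : Filter.Tendsto (fun n : ℕ => f (q ^ n)) Filter.atTop (nhds 0)) :
    ‖jacksonC q fun x => f x * (starRingEnd ℂ) (f (q * x))‖ ≤
      (1 + q ^ (-(1 : ℝ) / 2)) * qNorm2 q (qDeriv q f) *
        Real.sqrt (jacksonR q fun x => x ^ 2 * ‖f x‖ ^ 2) :=
  q_uncertainty_shifted_form_general q hq0 hq1 f hf hxf hDf
end
end
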